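/- arXiv:1909.01306 — 2 statements merged into one kernel-verified Lean document; each statement's English description precedes it below -/
import Mathlib

section
/- Let a and n be integers with 2 ≤ a ≤ n − 2 and gcd(a,n) = 1. Then the interior of P_{a,n} contains at least two visible lattice points, i.e. V(a,n) ≥ 2. -/
/-- `(x, y) ∈ ℤ²` lies in the interior of the lattice parallelogram
`P_{a,n} = {t₁·(1,0) + t₂·(a,n) : 0 ≤ t₁, t₂ ≤ 1}`. -/
def inInteriorP (a n : ℤ) (p : ℤ × ℤ) : Prop :=
  ∃ t₁ t₂ : ℝ, 0 < t₁ ∧ t₁ < 1 ∧ 0 < t₂ ∧ t₂ < 1 ∧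
    (p.1 : ℝ) = t₁ + t₂ * (a : ℝ) ∧ (p.2 : ℝ) = t₂ * (n : ℝ)

/-- A lattice point `(x, y) ∈ ℤ²` is visible (from the origin) if `gcd(x, y) = 1`. -/
def VisiblePt (p : ℤ × ℤ) : Prop := Int.gcd p.1 p.2 = 1

/-- `V a n` is the number of visible lattice points in the interior of `P_{a,n}`. -/
noncomputable def V (a n : ℤ) : ℕ :=
  {p : ℤ × ℤ | inInteriorP a n p ∧ VisiblePt p}.ncard

/-!
The point `(1, 1)` is always an interior visible point. A second one comes from Bézout:
choose `0 < y < n` with `a y ≡ -1 (mod n)` and put `x = (a y + 1) / n`. Then `x n - a y = 1`,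
which places `(x, y)` strictly inside `P_{a,n}` (its coordinates in the basis `(1,0), (a,n)` are
`1/n` and `y/n`) and makes it visible; it differs from `(1, 1)` because `n ∤ a + 1`.
-/

lemma visiblePt_iff_isCoprime (x y : ℤ) : VisiblePt (x, y) ↔ IsCoprime x y :=
  Int.isCoprime_iff_gcd_eq_one.symm

lemma inInteriorP_of_lt {a n x y : ℤ} (hy₀ : 0 < y) (hyn : y < n)
    (h₀ : 0 < x * n - a * y) (hn : x * n - a * y < n) : inInteriorP a n (x, y) := by
  have hnR : (0 : ℝ) < n := by exact_mod_cast hy₀.trans hyn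
  refine ⟨((x * n - a * y : ℤ) : ℝ) / n, (y : ℝ) / n, ?_, ?_, ?_, ?_, ?_, ?_⟩
  · exact div_pos (by exact_mod_cast h₀) hnR
  · exact (div_lt_one hnR).2 (by exact_mod_cast hn)
  · exact div_pos (by exact_mod_cast hy₀) hnR
  · exact (div_lt_one hnR).2 (by exact_mod_cast hyn)
  · push_cast; field_simp; ring
  · field_simp

lemma setOf_inInteriorP_finite (a n : ℤ) : {p : ℤ × ℤ | inInteriorP a n p}.Finite := by
  refine ((Set.finite_Icc (-(|a| + 1)) (|a| + 1)).prod (Set.finite_Icc (-|n|) |n|)).subset ?_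
  rintro ⟨x, y⟩ ⟨t₁, t₂, h₁₀, h₁₁, h₂₀, h₂₁, hx, hy⟩
  have hxa : |(x : ℝ)| ≤ |(a : ℝ)| + 1 := by
    rw [hx]
    calc |t₁ + t₂ * a| ≤ |t₁| + |t₂| * |(a : ℝ)| := (abs_add_le _ _).trans_eq (by rw [abs_mul])
      _ ≤ 1 * 1 + 1 * |(a : ℝ)| := by
        rw [abs_of_pos h₁₀, abs_of_pos h₂₀]; gcongr; linarith
      _ = |(a : ℝ)| + 1 := by ring
  have hyn : |(y : ℝ)| ≤ |(n : ℝ)| := by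
    rw [hy, abs_mul, abs_of_pos h₂₀]
    exact mul_le_of_le_one_left (abs_nonneg _) h₂₁.le
  exact ⟨abs_le.1 (by exact_mod_cast hxa), abs_le.1 (by exact_mod_cast hyn)⟩

lemma exists_pos_lt_dvd_mul_add_one {a n : ℤ} (hn : 1 < n) (h : IsCoprime a n) :
    ∃ y, 0 < y ∧ y < n ∧ n ∣ a * y + 1 := by
  obtain ⟨u, v, huv⟩ := h
  refine ⟨-u % n, ?_, Int.emod_lt_of_pos _ (by omega), v - a * (-u / n), ?_⟩
  · refine (Int.emod_nonneg _ (by omega)).lt_of_ne fun h0 ↦ ?_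
    have hnu : n ∣ u := (Int.dvd_neg).1 (Int.dvd_of_emod_eq_zero h0.symm)
    have hn1 : n ∣ 1 := huv ▸ dvd_add (hnu.mul_right a) (dvd_mul_left n v)
    exact absurd (Int.le_of_dvd one_pos hn1) (by omega)
  · rw [Int.emod_def]
    linear_combination -huv

/-- For `2 ≤ a ≤ n − 2` with `gcd(a, n) = 1`, the interior of `P_{a,n}`
contains at least two visible lattice points. -/
theorem two_le_V (a n : ℤ) (ha : 2 ≤ a) (han : a ≤ n - 2)
    (hgcd : Int.gcd a n = 1) : 2 ≤ V a n := by
  obtain ⟨y, hy₀, hyn, x, hx⟩ :=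
    exists_pos_lt_dvd_mul_add_one (by omega) (Int.isCoprime_iff_gcd_eq_one.2 hgcd)
  have hfin : {p : ℤ × ℤ | inInteriorP a n p ∧ VisiblePt p}.Finite :=
    (setOf_inInteriorP_finite a n).subset fun _ hp ↦ hp.1
  refine (Set.one_lt_ncard_iff hfin).2 ⟨(1, 1), (x, y), ⟨?_, ?_⟩, ⟨?_, ?_⟩, ?_⟩
  · exact inInteriorP_of_lt one_pos (by omega) (by omega) (by omega)
  · exact (visiblePt_iff_isCoprime 1 1).2 isCoprime_one_left
  · exact inInteriorP_of_lt hy₀ hyn (by linarith) (by linarith)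
  · exact (visiblePt_iff_isCoprime x y).2 ⟨n, -a, by linarith⟩
  · rintro ⟨⟩
    omega
end

section
/- Let a and n be integers with n ≥ 2, 1 ≤ a < n and gcd(a,n) = 1. Then V(a,n) = 1 if and only if a = n − 1, and V(a,n) = n − 1 if and only if a = 1. -/
/-!
For `0 < y < n` the line at height `y` meets the interior of `P_{a,n}` in exactly one lattice
point, `(⌊ay/n⌋ + 1, y)`, because `n ∤ ay`; so `V(a,n)` counts the heights whose point is visible.
For `a = 1` these points are `(1, y)`, all visible; for `a = n - 1` they are `(y, y)`, visible
only for `y = 1`. If `a ≠ n - 1`, besides `(1, 1)` the point at the height `y` with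
`ay ≡ -1 (mod n)` is visible, since `nx - ay = 1` there. If `a ≥ 2`, some even `y` has
`n < ay < 2n`, and its point `(2, y)` is not visible.
-/

lemma inInteriorP_iff {a n : ℤ} (hn : 0 < n) {x y : ℤ} :
    inInteriorP a n (x, y) ↔ 0 < y ∧ y < n ∧ a * y < n * x ∧ n * x < a * y + n := by
  have hn' : (0 : ℝ) < n := by exact_mod_cast hn
  constructor
  · rintro ⟨t₁, t₂, ht₁, ht₁', ht₂, ht₂', hx, hy⟩
    have hnx : (n : ℝ) * x = n * t₁ + a * y := by rw [hx, hy]; ring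
    refine ⟨?_, ?_, ?_, ?_⟩
    · exact_mod_cast (show (0 : ℝ) < y by rw [hy]; positivity)
    · exact_mod_cast (show (y : ℝ) < n by rw [hy]; nlinarith)
    · exact_mod_cast (show (a : ℝ) * y < n * x by rw [hnx]; nlinarith)
    · exact_mod_cast (show (n : ℝ) * x < a * y + n by rw [hnx]; nlinarith)
  · rintro ⟨hy, hy', hx, hx'⟩
    have hx : (a : ℝ) * y < n * x := by exact_mod_cast hx
    have hx' : (n : ℝ) * x < a * y + n := by exact_mod_cast hx'
    refine ⟨(n * x - a * y) / n, y / n, ?_, ?_, ?_, ?_, ?_, ?_⟩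
    · exact div_pos (by linarith) hn'
    · exact (div_lt_one hn').mpr (by linarith)
    · exact div_pos (by exact_mod_cast hy) hn'
    · exact (div_lt_one hn').mpr (by exact_mod_cast hy')
    · field_simp; ring
    · field_simp

lemma Int.ediv_add_one_eq_of_lt_mul {m n x : ℤ} (hn : 0 < n) (h : m < n * x)
    (h' : n * x < m + n) : m / n + 1 = x := by
  have hlt : m / n < x := (Int.ediv_lt_iff_lt_mul hn).mpr (by linarith)
  have hle : x - 1 ≤ m / n := (Int.le_ediv_iff_mul_le hn).mpr (by linarith)
  omega

lemma Int.lt_mul_ediv_add_one {m n : ℤ} (hn : 0 < n) (hm : ¬ n ∣ m) :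
    m < n * (m / n + 1) ∧ n * (m / n + 1) < m + n := by
  have hlt : m < (m / n + 1) * n := Int.lt_ediv_add_one_mul_self m hn
  have hle : m / n * n ≤ m := Int.ediv_mul_le m hn.ne'
  have hne : m / n * n ≠ m := fun h => hm ⟨m / n, by linarith⟩
  constructor <;> nlinarith [lt_of_le_of_ne hle hne]

lemma not_dvd_mul_of_gcd_eq_one {a n y : ℤ} (hgcd : Int.gcd a n = 1) (hy : 0 < y)
    (hyn : y < n) : ¬ n ∣ a * y := fun h =>
  have hdvd : n ∣ y := (Int.isCoprime_iff_gcd_eq_one.mpr hgcd).symm.dvd_of_dvd_mul_left h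
  absurd (Int.le_of_dvd hy hdvd) (not_le.mpr hyn)

lemma inInteriorP_iff_of_gcd_eq_one {a n : ℤ} (hn : 0 < n) (hgcd : Int.gcd a n = 1) {x y : ℤ} :
    inInteriorP a n (x, y) ↔ y ∈ Finset.Ioo 0 n ∧ x = a * y / n + 1 := by
  rw [inInteriorP_iff hn, Finset.mem_Ioo]
  constructor
  · rintro ⟨hy, hyn, hx, hx'⟩
    exact ⟨⟨hy, hyn⟩, (Int.ediv_add_one_eq_of_lt_mul hn hx hx').symm⟩
  · rintro ⟨⟨hy, hyn⟩, rfl⟩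
    exact ⟨hy, hyn, Int.lt_mul_ediv_add_one hn (not_dvd_mul_of_gcd_eq_one hgcd hy hyn)⟩

instance : DecidablePred VisiblePt := fun p => inferInstanceAs (Decidable (Int.gcd p.1 p.2 = 1))

noncomputable def visibleHeights (a n : ℤ) : Finset ℤ :=
  (Finset.Ioo 0 n).filter fun y => VisiblePt (a * y / n + 1, y)

lemma mem_visibleHeights {a n y : ℤ} :
    y ∈ visibleHeights a n ↔ (0 < y ∧ y < n) ∧ Int.gcd (a * y / n + 1) y = 1 := by
  rw [visibleHeights, Finset.mem_filter, Finset.mem_Ioo, VisiblePt]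

lemma V_eq_card_visibleHeights {a n : ℤ} (hn : 0 < n) (hgcd : Int.gcd a n = 1) :
    V a n = (visibleHeights a n).card := by
  have hset : {p : ℤ × ℤ | inInteriorP a n p ∧ VisiblePt p} =
      (fun y => (a * y / n + 1, y)) '' (visibleHeights a n : Set ℤ) := by
    ext ⟨x, y⟩
    simp only [Set.mem_ofPred_eq, Set.mem_image, Finset.mem_coe, visibleHeights,
      Finset.mem_filter, inInteriorP_iff_of_gcd_eq_one hn hgcd, Prod.mk.injEq]
    constructor
    · rintro ⟨⟨hy, rfl⟩, hvis⟩
      exact ⟨y, ⟨hy, hvis⟩, rfl, rfl⟩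
    · rintro ⟨y, ⟨hy, hvis⟩, rfl, rfl⟩
      exact ⟨⟨hy, rfl⟩, hvis⟩
  rw [V, hset, Set.ncard_image_of_injective _ fun _ _ h => congrArg Prod.snd h,
    Set.ncard_coe_finset]

lemma visibleHeights_one (n : ℤ) : visibleHeights 1 n = Finset.Ioo 0 n := by
  refine Finset.filter_true_of_mem fun y hy => ?_
  rw [Finset.mem_Ioo] at hy
  simp [VisiblePt, Int.ediv_eq_zero_of_lt hy.1.le hy.2]

lemma visibleHeights_sub_one {n : ℤ} (hn : 1 < n) : visibleHeights (n - 1) n = {1} := by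
  ext y
  rw [mem_visibleHeights, Finset.mem_singleton]
  constructor
  · rintro ⟨⟨hy, hyn⟩, hvis⟩
    rwa [Int.ediv_add_one_eq_of_lt_mul (x := y) (by omega) (by nlinarith) (by nlinarith),
      Int.gcd_self, Int.natAbs_eq_iff, Nat.cast_one, or_iff_left (by omega)] at hvis
  · rintro rfl
    exact ⟨⟨one_pos, hn⟩, Int.gcd_one_right _⟩

lemma one_mem_visibleHeights {a n : ℤ} (hn : 1 < n) : 1 ∈ visibleHeights a n :=
  mem_visibleHeights.mpr ⟨⟨one_pos, hn⟩, Int.gcd_one_right _⟩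

lemma mem_visibleHeights_of_mul_add_one_eq {a n x y : ℤ} (hn : 1 < n) (hy : 0 < y) (hyn : y < n)
    (hxy : a * y + 1 = n * x) : y ∈ visibleHeights a n := by
  have hx : a * y / n + 1 = x := Int.ediv_add_one_eq_of_lt_mul (by omega) (by omega) (by omega)
  have hcop : IsCoprime x y := ⟨n, -a, by linear_combination -hxy⟩
  rw [mem_visibleHeights, hx]
  exact ⟨⟨hy, hyn⟩, Int.isCoprime_iff_gcd_eq_one.mp hcop⟩

lemma exists_mul_add_one_eq_of_gcd_eq_one {a n : ℤ} (hn : 0 < n) (hgcd : Int.gcd a n = 1) :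
    ∃ y x, 0 ≤ y ∧ y < n ∧ a * y + 1 = n * x := by
  obtain ⟨u, v, huv⟩ := Int.isCoprime_iff_gcd_eq_one.mpr hgcd
  refine ⟨-u % n, v - a * (-u / n), Int.emod_nonneg _ hn.ne', Int.emod_lt_of_pos _ hn, ?_⟩
  rw [Int.emod_def]
  linear_combination -huv

lemma one_lt_card_visibleHeights {a n : ℤ} (ha : 0 ≤ a) (han : a < n) (hgcd : Int.gcd a n = 1)
    (hne : a ≠ n - 1) : 1 < (visibleHeights a n).card := by
  obtain ⟨y, x, hy, hyn, hxy⟩ := exists_mul_add_one_eq_of_gcd_eq_one (by omega) hgcd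
  have hy0 : y ≠ 0 := by
    rintro rfl
    have : n ∣ 1 := ⟨x, by simpa using hxy⟩
    have := Int.le_of_dvd one_pos this
    omega
  have hy1 : y ≠ 1 := by
    rintro rfl
    have : n ∣ a + 1 := ⟨x, by simpa using hxy⟩
    have := Int.le_of_dvd (by omega) this
    omega
  exact Finset.one_lt_card.mpr ⟨1, one_mem_visibleHeights (by omega), y,
    mem_visibleHeights_of_mul_add_one_eq (by omega) (by omega) hyn hxy, Ne.symm hy1⟩

lemma exists_even_lt_mul_lt_two_mul {a n : ℤ} (ha : 2 ≤ a) (han : a < n) (h2a : 2 * a ≠ n) :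
    ∃ y, Even y ∧ 0 < y ∧ y < n ∧ n < a * y ∧ a * y < 2 * n := by
  set k := n / (2 * a) + 1
  have hk : n < k * (2 * a) := Int.lt_ediv_add_one_mul_self n (by omega)
  have hk' : k * (2 * a) < 2 * n := by
    rcases lt_or_gt_of_ne h2a with h | h
    · have := Int.ediv_mul_le n (show 2 * a ≠ 0 by omega)
      linarith
    · have : k = 1 := by simp [k, Int.ediv_eq_zero_of_lt (by omega : 0 ≤ n) h]
      rw [this]
      omega
  exact ⟨2 * k, even_two_mul k, by nlinarith, by nlinarith, by linarith, by linarith⟩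

lemma card_visibleHeights_lt {a n : ℤ} (ha : 2 ≤ a) (han : a < n) (hgcd : Int.gcd a n = 1) :
    (visibleHeights a n).card < (Finset.Ioo 0 n).card := by
  have h2a : 2 * a ≠ n := by
    rintro rfl
    have := Int.gcd_eq_left (by omega) (dvd_mul_left a 2)
    omega
  obtain ⟨y, ⟨k, rfl⟩, hy, hyn, hay, hay'⟩ := exists_even_lt_mul_lt_two_mul ha han h2a
  have hx : a * (k + k) / n + 1 = 2 :=
    Int.ediv_add_one_eq_of_lt_mul (by omega) (by linarith) (by linarith)
  have hnot : k + k ∉ visibleHeights a n := by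
    rw [mem_visibleHeights, hx]
    have := Int.gcd_eq_left zero_le_two (⟨k, by ring⟩ : (2 : ℤ) ∣ k + k)
    omega
  exact Finset.card_lt_card <| (Finset.ssubset_iff_of_subset (Finset.filter_subset _ _)).mpr
    ⟨k + k, Finset.mem_Ioo.mpr ⟨hy, hyn⟩, hnot⟩

theorem V_eq_one_iff_and_V_eq_n_sub_one_iff_general (a n : ℤ)
    (ha : 1 ≤ a) (han : a < n) (hgcd : Int.gcd a n = 1) :
    ((V a n : ℤ) = 1 ↔ a = n - 1) ∧ ((V a n : ℤ) = n - 1 ↔ a = 1) := by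
  rw [V_eq_card_visibleHeights (by omega) hgcd]
  refine ⟨⟨fun h => ?_, ?_⟩, ⟨fun h => ?_, ?_⟩⟩
  · by_contra hne
    have := one_lt_card_visibleHeights (by omega) han hgcd hne
    omega
  · rintro rfl
    simp [visibleHeights_sub_one (by omega : 1 < n)]
  · by_contra hne
    have := card_visibleHeights_lt (by omega) han hgcd
    rw [Int.card_Ioo] at this
    omega
  · rintro rfl
    rw [visibleHeights_one, Int.card_Ioo]
    omega

/-- `V(a,n) = 1` iff `a = n − 1`, and `V(a,n) = n − 1` iff `a = 1`. -/
theorem V_eq_one_iff_and_V_eq_n_sub_one_iff (a n : ℤ) (hn : 2 ≤ n)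
    (ha : 1 ≤ a) (han : a < n) (hgcd : Int.gcd a n = 1) :
    ((V a n : ℤ) = 1 ↔ a = n - 1) ∧ ((V a n : ℤ) = n - 1 ↔ a = 1) :=
  V_eq_one_iff_and_V_eq_n_sub_one_iff_general a n ha han hgcd
end
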